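/- Let μ be a probability measure on ℝ^d with W_p(μ, μ̂) ≤ ε, where μ̂ = (P_{B_R})_♯ μ is supported in B_R. If μ̂_h = Σ_λ (μ̂(V_{hλ})/τ_{hλ}(V_{hλ})) τ_{hλ} is the scaled lattice Voronoi approximation with h = 3(𝒩/N)^{1/d} and 𝒩 = N(B_R, V_0), then W_p(μ, μ̂_h) ≤ 3 diam(V_0) 𝒩^{1/d} N^{-1/d} + ε. -/

import Mathlib

open MeasureTheory ENNReal Set Metric

noncomputable section

abbrev Euc (d : ℕ) : Type := EuclideanSpace ℝ (Fin d)

/-- Covering number: minimal number of translates of `T` needed to cover `K`. -/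
def coveringNumber {d : ℕ} (K T : Set (Euc d)) : ℝ≥0∞ :=
  ⨅ (s : Finset (Euc d)) (_ : K ⊆ ⋃ a ∈ s, (a + ·) '' T), (s.card : ℝ≥0∞)

/-- Wasserstein-`p` distance, via couplings. -/
def Wp {d : ℕ} (p : ℝ) (μ ν : Measure (Euc d)) : ℝ≥0∞ :=
  (⨅ (π : Measure (Euc d × Euc d))
      (_ : π.map Prod.fst = μ ∧ π.map Prod.snd = ν),
    ∫⁻ z, ENNReal.ofReal (dist z.1 z.2 ^ p) ∂π) ^ (1 / p)

/-- Voronoi cell at the origin of a lattice. -/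
def voronoiCell {d : ℕ} (Λ : Submodule ℤ (Euc d)) : Set (Euc d) :=
  {x | ∀ l ∈ Λ, ‖x‖ ≤ ‖x - l‖}

/-- Radius of a set: supremum of norms of its points. -/
def rad {d : ℕ} (S : Set (Euc d)) : ℝ := sSup ((fun x => ‖x‖) '' S)

/-- `p`-th moment of a measure. -/
def Mp {d : ℕ} (p : ℝ) (μ : Measure (Euc d)) : ℝ≥0∞ :=
  ∫⁻ x, ENNReal.ofReal (‖x‖ ^ p) ∂μ

end

noncomputable def projBall {d : ℕ} (R : ℝ) (x : Euc d) : Euc d :=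
  if ‖x‖ ≤ R then x else (R / ‖x‖) • x

open ProbabilityTheory

lemma voronoiCell_isBounded {d : ℕ} (Λ : Submodule ℤ (Euc d)) [DiscreteTopology Λ]
    [IsZLattice ℝ Λ] : Bornology.IsBounded (voronoiCell Λ) := by
  haveI := ZLattice.module_free ℝ Λ
  haveI := ZLattice.module_finite ℝ Λ
  let b := Module.Free.chooseBasis ℤ Λ
  let B := b.ofZLatticeBasis ℝ Λ
  rcases (isBounded_iff_forall_norm_le.1 (ZSpan.fundamentalDomain_isBounded B)) with ⟨r, hr⟩
  refine isBounded_iff_forall_norm_le.2 ⟨r, fun x hx => ?_⟩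
  have hfl : (ZSpan.floor B x : Euc d) ∈ Λ := by
    have h2 := (ZSpan.floor B x).2
    have hsp : Submodule.span ℤ (Set.range ⇑B) = Λ := b.ofZLatticeBasis_span ℝ
    exact hsp.le h2
  calc ‖x‖ ≤ ‖x - (ZSpan.floor B x : Euc d)‖ := hx _ hfl
    _ = ‖ZSpan.fract B x‖ := by rw [ZSpan.fract_apply]
    _ ≤ r := hr _ (ZSpan.fract_mem_fundamentalDomain B x)

lemma measurable_projBall {d : ℕ} (R : ℝ) : Measurable (projBall (d := d) R) :=
  Measurable.ite (measurableSet_le measurable_norm measurable_const) measurable_id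
    ((measurable_const.div measurable_norm).smul measurable_id)

set_option maxHeartbeats 1000000 in
theorem stmt19 {d : ℕ} (hd : 0 < d) (p h R ε : ℝ) (hp : 1 ≤ p) (hR : 0 < R)
    (hε : 0 ≤ ε)
    (μ : Measure (Euc d)) [IsProbabilityMeasure μ]
    (hWμ : Wp p μ (μ.map (projBall R)) ≤ ENNReal.ofReal ε)
    (Λ : Submodule ℤ (Euc d)) [DiscreteTopology Λ] [IsZLattice ℝ Λ]
    (N M : ℕ) (hN : 0 < N) (hM : 0 < M)
    (hMeq : coveringNumber (closedBall (0 : Euc d) R) (voronoiCell Λ) = (M : ℝ≥0∞))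
    (hhdef : h = 3 * ((M : ℝ) / (N : ℝ)) ^ ((1 : ℝ) / d))
    (V : Λ → Set (Euc d))
    (hVmeas : ∀ l, MeasurableSet (V l))
    (hVsub : ∀ l : Λ, V l ⊆ (fun x => h • (x + (l : Euc d))) '' voronoiCell Λ)
    (hVdisj : Pairwise (Function.onFun Disjoint V))
    (hVcover : (⋃ l, V l) = Set.univ)
    (τ : Λ → Measure (Euc d))
    (hτsupp : ∀ l, τ l ((V l)ᶜ) = 0)
    (hτpos : ∀ l, τ l (V l) ≠ 0)
    (hτfin : ∀ l, τ l (V l) ≠ ⊤) :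
    Wp p μ (Measure.sum fun l : Λ => ((μ.map (projBall R)) (V l) / τ l (V l)) • τ l)
      ≤ ENNReal.ofReal
          (3 * diam (voronoiCell Λ) * (M : ℝ) ^ ((1 : ℝ) / d) * (N : ℝ) ^ (-(1 : ℝ) / d) + ε) := by
  classical
  have hp0 : (0:ℝ) < p := lt_of_lt_of_le one_pos hp
  have hp0' : p ≠ 0 := hp0.ne'
  -- the target measure
  set ν : Measure (Euc d) := μ.map (projBall R) with hνdef
  haveI : IsProbabilityMeasure ν := Measure.isProbabilityMeasure_map (measurable_projBall R).aemeasurable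
  clear_value ν
  -- geometry
  have hh0 : 0 ≤ h := by
    rw [hhdef]
    positivity
  set creal : ℝ := h * diam (voronoiCell Λ) with hcrealdef
  have hcreal0 : 0 ≤ creal := mul_nonneg hh0 diam_nonneg
  have hbd : Bornology.IsBounded (voronoiCell Λ) := voronoiCell_isBounded Λ
  have hdistV : ∀ l : Λ, ∀ y ∈ V l, ∀ z ∈ V l, dist y z ≤ creal := by
    intro l y hy z hz
    obtain ⟨a, ha, rfl⟩ := hVsub l hy
    obtain ⟨b, hb, rfl⟩ := hVsub l hz
    have : dist (h • (a + (l : Euc d))) (h • (b + (l : Euc d))) = h * dist a b := by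
      rw [dist_eq_norm, ← smul_sub, norm_smul, Real.norm_eq_abs, abs_of_nonneg hh0,
        add_sub_add_right_eq_sub, ← dist_eq_norm]
    rw [this]
    exact mul_le_mul_of_nonneg_left (dist_le_diam_of_mem hbd ha hb) hh0
  -- the reference measures
  set m₂ : Λ → Measure (Euc d) := fun l => (ν (V l) / τ l (V l)) • τ l with hm₂def
  clear_value m₂
  have hτuniv : ∀ l, τ l Set.univ = τ l (V l) := by
    intro l
    refine le_antisymm ?_ (measure_mono (subset_univ _))
    calc τ l Set.univ = τ l (V l ∪ (V l)ᶜ) := by rw [union_compl_self]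
      _ ≤ τ l (V l) + τ l ((V l)ᶜ) := measure_union_le _ _
      _ = τ l (V l) := by rw [hτsupp l, add_zero]
  have hτfinM : ∀ l, IsFiniteMeasure (τ l) := fun l =>
    ⟨by rw [hτuniv l]; exact (hτfin l).lt_top⟩
  have hνfin : ∀ l, ν (V l) ≠ ⊤ := fun l => measure_ne_top _ _
  have hm₂univ : ∀ l, m₂ l Set.univ = ν (V l) := by
    intro l
    rw [hm₂def]
    simp only [Measure.smul_apply, smul_eq_mul]
    rw [hτuniv l, ENNReal.div_mul_cancel (hτpos l) (hτfin l)]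
  have hm₂compl : ∀ l, m₂ l ((V l)ᶜ) = 0 := by
    intro l
    simp only [hm₂def, Measure.smul_apply, smul_eq_mul, hτsupp l, mul_zero]
  have hm₂fin : ∀ l, IsFiniteMeasure (m₂ l) := by
    intro l
    exact ⟨by rw [hm₂univ l]; exact (hνfin l).lt_top⟩
  -- the second coupling π₂ between ν and sum m₂
  set π₂ : Measure (Euc d × Euc d) :=
    Measure.sum (fun l : Λ => (ν (V l))⁻¹ • ((ν.restrict (V l)).prod (m₂ l))) with hπ₂def
  clear_value π₂
  have hterm : ∀ (l : Λ) (s : Set (Euc d × Euc d)), MeasurableSet s →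
      ((ν (V l))⁻¹ • ((ν.restrict (V l)).prod (m₂ l))) s
        = (ν (V l))⁻¹ * ((ν.restrict (V l)).prod (m₂ l)) s := by
    intro l s _
    simp [Measure.smul_apply]
  -- first marginal of π₂
  have hsum_inter : ∀ A : Set (Euc d), MeasurableSet A → (∑' l : Λ, ν (A ∩ V l)) = ν A := by
    intro A hA
    have h1 : ν A = ν (⋃ l : Λ, A ∩ V l) := by
      rw [← inter_iUnion, hVcover, inter_univ]
    rw [h1, measure_iUnion (fun i j hij => ((hVdisj hij).mono inter_subset_right
      inter_subset_right)) (fun l => hA.inter (hVmeas l))]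
  have hπ₂fst : π₂.map Prod.fst = ν := by
    ext A hA
    rw [Measure.map_apply measurable_fst hA, hπ₂def,
      Measure.sum_apply _ (measurable_fst hA)]
    have hpre : (Prod.fst ⁻¹' A : Set (Euc d × Euc d)) = A ×ˢ Set.univ := by
      ext q; simp
    rw [← hsum_inter A hA]
    refine tsum_congr fun l => ?_
    haveI := hm₂fin l
    rw [hterm l _ (measurable_fst hA), hpre,
      Measure.prod_prod (μ := ν.restrict (V l)) (ν := m₂ l),
      Measure.restrict_apply hA, hm₂univ l]
    rcases eq_or_ne (ν (V l)) 0 with h0 | h0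
    · have hz : ν (A ∩ V l) = 0 :=
        measure_mono_null inter_subset_right h0
      rw [h0, hz, mul_zero, mul_zero]
    · rw [mul_comm (ν (A ∩ V l)), ← mul_assoc, ENNReal.inv_mul_cancel h0 (hνfin l), one_mul]
  have hπ₂fst' : π₂.fst = ν := hπ₂fst
  -- second marginal of π₂
  have hπ₂snd : π₂.map Prod.snd = Measure.sum m₂ := by
    ext A hA
    rw [Measure.map_apply measurable_snd hA, hπ₂def,
      Measure.sum_apply _ (measurable_snd hA), Measure.sum_apply _ hA]
    have hpre : (Prod.snd ⁻¹' A : Set (Euc d × Euc d)) = Set.univ ×ˢ A := by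
      ext q; simp
    refine tsum_congr fun l => ?_
    haveI := hm₂fin l
    rw [hterm l _ (measurable_snd hA), hpre,
      Measure.prod_prod (μ := ν.restrict (V l)) (ν := m₂ l),
      Measure.restrict_apply MeasurableSet.univ, univ_inter]
    rcases eq_or_ne (ν (V l)) 0 with h0 | h0
    · have hz : m₂ l A = 0 := by
        refine le_antisymm ?_ zero_le
        calc m₂ l A ≤ m₂ l Set.univ := measure_mono (subset_univ _)
          _ = 0 := by rw [hm₂univ l, h0]
      rw [h0, hz, mul_zero, mul_zero]
    · rw [← mul_assoc, ENNReal.inv_mul_cancel h0 (hνfin l), one_mul]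
  -- π₂ is a probability measure
  haveI : IsProbabilityMeasure π₂ := by
    constructor
    have h1 : (π₂.map Prod.fst) Set.univ = π₂ Set.univ := by
      rw [Measure.map_apply measurable_fst MeasurableSet.univ, preimage_univ]
    rw [← h1, hπ₂fst, measure_univ]
  -- π₂ gives no mass to distant pairs
  have hπ₂bad : π₂ {q : Euc d × Euc d | creal < dist q.1 q.2} = 0 := by
    set B := {q : Euc d × Euc d | creal < dist q.1 q.2} with hBdef
    have hBm : MeasurableSet B := measurableSet_lt measurable_const measurable_dist
    rw [hπ₂def, Measure.sum_apply _ hBm]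
    refine ENNReal.tsum_eq_zero.2 fun l => ?_
    haveI := hm₂fin l
    rw [hterm l _ hBm]
    have hBsub : B ⊆ ((V l)ᶜ ×ˢ Set.univ) ∪ (Set.univ ×ˢ (V l)ᶜ) := by
      intro q hq
      by_contra hcon
      simp only [mem_union, mem_prod, mem_univ, and_true, true_and, mem_compl_iff,
        not_or, not_not] at hcon
      exact absurd (hdistV l q.1 hcon.1 q.2 hcon.2) (not_le.2 hq)
    have hz : ((ν.restrict (V l)).prod (m₂ l)) B = 0 := by
      refine measure_mono_null hBsub ?_
      refine le_antisymm ?_ zero_le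
      calc ((ν.restrict (V l)).prod (m₂ l)) (((V l)ᶜ ×ˢ Set.univ) ∪ (Set.univ ×ˢ (V l)ᶜ))
          ≤ ((ν.restrict (V l)).prod (m₂ l)) ((V l)ᶜ ×ˢ Set.univ)
            + ((ν.restrict (V l)).prod (m₂ l)) (Set.univ ×ˢ (V l)ᶜ) := measure_union_le _ _
        _ = 0 := by
            rw [Measure.prod_prod (μ := ν.restrict (V l)) (ν := m₂ l),
              Measure.prod_prod (μ := ν.restrict (V l)) (ν := m₂ l),
              Measure.restrict_apply (hVmeas l).compl, compl_inter_self, hm₂compl l]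
            simp
    rw [hz, mul_zero]
  -- unfold Wasserstein distances
  rw [Wp] at hWμ
  rw [Wp]
  -- extract a bound on the optimal coupling cost between μ and ν
  have hI₁ : (⨅ (π : Measure (Euc d × Euc d))
      (_ : π.map Prod.fst = μ ∧ π.map Prod.snd = ν),
      ∫⁻ z, ENNReal.ofReal (dist z.1 z.2 ^ p) ∂π) ≤ ENNReal.ofReal ε ^ p := by
    have h2 := ENNReal.rpow_le_rpow hWμ hp0.le
    rwa [← ENNReal.rpow_mul, one_div_mul_cancel hp0', ENNReal.rpow_one] at h2
  -- main estimate, with an δ of room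
  refine ENNReal.le_of_forall_pos_le_add fun δ hδ _ => ?_
  set δ' : ℝ≥0∞ := (δ : ℝ≥0∞) ^ p with hδ'def
  have hδ'0 : δ' ≠ 0 := by
    rw [hδ'def]
    exact (ENNReal.rpow_pos (by exact_mod_cast hδ) coe_ne_top).ne'
  have hδ'top : δ' ≠ ⊤ := ENNReal.rpow_ne_top_of_nonneg hp0.le coe_ne_top
  have hδ'root : δ' ^ (1/p) = (δ : ℝ≥0∞) := by
    rw [hδ'def, ← ENNReal.rpow_mul, mul_one_div_cancel hp0', ENNReal.rpow_one]
  -- choose a near-optimal coupling π₁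
  have hlt : (⨅ (π : Measure (Euc d × Euc d))
      (_ : π.map Prod.fst = μ ∧ π.map Prod.snd = ν),
      ∫⁻ z, ENNReal.ofReal (dist z.1 z.2 ^ p) ∂π) < ENNReal.ofReal ε ^ p + δ' :=
    lt_of_le_of_lt hI₁ (ENNReal.lt_add_right
      (ENNReal.rpow_ne_top_of_nonneg hp0.le ofReal_ne_top) hδ'0)
  simp only [iInf_lt_iff] at hlt
  obtain ⟨π₁, hπ₁marg, hcost₁⟩ := hlt
  haveI : IsProbabilityMeasure π₁ := by
    constructor
    have h1 : (π₁.map Prod.fst) Set.univ = π₁ Set.univ := by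
      rw [Measure.map_apply measurable_fst MeasurableSet.univ, preimage_univ]
    rw [← h1, hπ₁marg.1, measure_univ]
  -- swap π₁ and disintegrate
  set ρ : Measure (Euc d × Euc d) := π₁.map Prod.swap with hρdef
  haveI : IsProbabilityMeasure ρ := by
    rw [hρdef]; exact Measure.isProbabilityMeasure_map measurable_swap.aemeasurable
  clear_value ρ
  have hρfst : ρ.fst = ν := by
    show ρ.map Prod.fst = ν
    rw [hρdef, Measure.map_map measurable_fst measurable_swap]
    exact hπ₁marg.2
  set κ := ρ.condKernel with hκdef
  set η := π₂.condKernel with hηdef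
  haveI hκmk : IsMarkovKernel κ := by rw [hκdef]; infer_instance
  haveI hηmk : IsMarkovKernel η := by rw [hηdef]; infer_instance
  have hρdis : ν ⊗ₘ κ = ρ := by rw [hκdef, ← hρfst]; exact ρ.disintegrate _
  have hπ₂dis : ν ⊗ₘ η = π₂ := by rw [hηdef, ← hπ₂fst']; exact π₂.disintegrate _
  clear_value κ η
  -- the glued coupling
  set bigμ : Measure (Euc d × (Euc d × Euc d)) := ν ⊗ₘ (κ ×ₖ η) with hbigdef
  set πf : Measure (Euc d × Euc d) := bigμ.map Prod.snd with hπfdef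
  clear_value bigμ πf
  -- first marginal of πf is μ
  have hρsnd : ρ.map Prod.snd = μ := by
    rw [hρdef, Measure.map_map measurable_snd measurable_swap]
    exact hπ₁marg.1
  have hπffst : πf.map Prod.fst = μ := by
    ext A hA
    rw [hπfdef, Measure.map_map measurable_fst measurable_snd,
      Measure.map_apply (measurable_fst.comp measurable_snd) hA, hbigdef,
      Measure.compProd_apply (μ := ν) (κ := κ ×ₖ η) ((measurable_fst.comp measurable_snd) hA),
      ← hρsnd, Measure.map_apply measurable_snd hA, ← hρdis,
      Measure.compProd_apply (μ := ν) (κ := κ) (measurable_snd hA)]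
    refine lintegral_congr fun y => ?_
    have h1 : (Prod.mk y ⁻¹' ((Prod.fst ∘ Prod.snd) ⁻¹' A) : Set (Euc d × Euc d))
        = A ×ˢ Set.univ := by ext q; simp
    have h2 : (Prod.mk y ⁻¹' (Prod.snd ⁻¹' A) : Set (Euc d)) = A := by ext x; simp
    rw [h1, h2, Kernel.prod_apply κ η y, Measure.prod_prod (μ := κ y) (ν := η y),
      measure_univ, mul_one]
  -- second marginal of πf is the quantized measure
  have hπfsnd : πf.map Prod.snd = Measure.sum m₂ := by
    ext A hA
    rw [hπfdef, Measure.map_map measurable_snd measurable_snd,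
      Measure.map_apply (measurable_snd.comp measurable_snd) hA, hbigdef,
      Measure.compProd_apply (μ := ν) (κ := κ ×ₖ η) ((measurable_snd.comp measurable_snd) hA),
      ← hπ₂snd, Measure.map_apply measurable_snd hA, ← hπ₂dis,
      Measure.compProd_apply (μ := ν) (κ := η) (measurable_snd hA)]
    refine lintegral_congr fun y => ?_
    have h1 : (Prod.mk y ⁻¹' ((Prod.snd ∘ Prod.snd) ⁻¹' A) : Set (Euc d × Euc d))
        = Set.univ ×ˢ A := by ext q; simp
    have h2 : (Prod.mk y ⁻¹' (Prod.snd ⁻¹' A) : Set (Euc d)) = A := by ext x; simp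
    rw [h1, h2, Kernel.prod_apply κ η y, Measure.prod_prod (μ := κ y) (ν := η y),
      measure_univ, one_mul]
  -- bound the cost of πf
  have hFm : Measurable fun z : Euc d × Euc d => ENNReal.ofReal (dist z.1 z.2 ^ p) :=
    (measurable_dist.pow_const p).ennreal_ofReal
  -- a.e. bound on the distance between the middle and last coordinates
  have hbad : bigμ {q : Euc d × (Euc d × Euc d) | creal < dist q.1 q.2.2} = 0 := by
    have hm : MeasurableSet {q : Euc d × (Euc d × Euc d) | creal < dist q.1 q.2.2} :=
      measurableSet_lt measurable_const (measurable_fst.dist (measurable_snd.comp measurable_snd))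
    rw [hbigdef, Measure.compProd_apply (μ := ν) (κ := κ ×ₖ η) hm]
    have hB : π₂ {q : Euc d × Euc d | creal < dist q.1 q.2} = 0 := hπ₂bad
    rw [← hπ₂dis, Measure.compProd_apply (μ := ν) (κ := η)
      (measurableSet_lt measurable_const measurable_dist)] at hB
    rw [← hB]
    refine lintegral_congr fun y => ?_
    have h1 : (Prod.mk y ⁻¹' {q : Euc d × (Euc d × Euc d) | creal < dist q.1 q.2.2})
        = Set.univ ×ˢ {z : Euc d | creal < dist y z} := by ext q; simp
    have h2 : (Prod.mk y ⁻¹' {q : Euc d × Euc d | creal < dist q.1 q.2})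
        = {z : Euc d | creal < dist y z} := by ext z; simp
    rw [h1, h2, Kernel.prod_apply κ η y, Measure.prod_prod (μ := κ y) (ν := η y),
      measure_univ, one_mul]
  have haefin : ∀ᵐ q ∂bigμ, dist q.1 q.2.2 ≤ creal := by
    rw [ae_iff]
    convert hbad using 2
    ext q
    simp [not_le]
  -- functions for the Minkowski estimate
  set c : ℝ≥0∞ := ENNReal.ofReal creal with hcdef
  set G : Euc d × (Euc d × Euc d) → ℝ≥0∞ := fun q => ENNReal.ofReal (dist q.2.1 q.1) with hGdef
  have hGm : Measurable G := ((measurable_fst.comp measurable_snd).dist measurable_fst).ennreal_ofReal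
  have hptwise : ∀ᵐ q ∂bigμ, ENNReal.ofReal (dist q.2.1 q.2.2 ^ p) ≤ (G q + c) ^ p := by
    refine haefin.mono fun q hq => ?_
    have h1 : dist q.2.1 q.2.2 ≤ dist q.2.1 q.1 + creal :=
      le_trans (dist_triangle q.2.1 q.1 q.2.2) (by linarith [hq])
    calc ENNReal.ofReal (dist q.2.1 q.2.2 ^ p)
        ≤ ENNReal.ofReal ((dist q.2.1 q.1 + creal) ^ p) :=
          ofReal_le_ofReal (Real.rpow_le_rpow dist_nonneg h1 hp0.le)
      _ = ENNReal.ofReal (dist q.2.1 q.1 + creal) ^ p :=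
          (ENNReal.ofReal_rpow_of_nonneg (add_nonneg dist_nonneg hcreal0) hp0.le).symm
      _ = (G q + c) ^ p := by rw [ENNReal.ofReal_add dist_nonneg hcreal0]
  -- cost of πf
  have hcost : ∫⁻ z, ENNReal.ofReal (dist z.1 z.2 ^ p) ∂πf
      ≤ ∫⁻ q, (G q + c) ^ p ∂bigμ := by
    rw [hπfdef, lintegral_map hFm measurable_snd]
    exact lintegral_mono_ae hptwise
  haveI : IsMarkovKernel (κ ×ₖ η) := by infer_instance
  have hbiguniv : bigμ Set.univ = 1 := by
    rw [hbigdef, Measure.compProd_apply_univ (μ := ν) (κ := κ ×ₖ η), measure_univ]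
  -- Minkowski
  have hmink : (∫⁻ q, (G q + c) ^ p ∂bigμ) ^ (1/p)
      ≤ (∫⁻ q, G q ^ p ∂bigμ) ^ (1/p) + (∫⁻ (_ : Euc d × (Euc d × Euc d)), c ^ p ∂bigμ) ^ (1/p) :=
    ENNReal.lintegral_Lp_add_le hGm.aemeasurable aemeasurable_const hp
  have hconst : (∫⁻ (_ : Euc d × (Euc d × Euc d)), c ^ p ∂bigμ) ^ (1/p) = c := by
    rw [lintegral_const, hbiguniv, mul_one, ← ENNReal.rpow_mul, mul_one_div_cancel hp0',
      ENNReal.rpow_one]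
  -- ∫ G^p over bigμ equals the cost of π₁
  have hmidm : Measurable fun w : Euc d × Euc d => ENNReal.ofReal (dist w.2 w.1 ^ p) :=
    ((measurable_snd.dist measurable_fst).pow_const p).ennreal_ofReal
  have hGint : ∫⁻ q, G q ^ p ∂bigμ = ∫⁻ z, ENNReal.ofReal (dist z.1 z.2 ^ p) ∂π₁ := by
    have hGp : ∀ q : Euc d × (Euc d × Euc d), G q ^ p = ENNReal.ofReal (dist q.2.1 q.1 ^ p) := by
      intro q
      rw [hGdef, ENNReal.ofReal_rpow_of_nonneg dist_nonneg hp0.le]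
    have hπ₁ρ : π₁ = ρ.map Prod.swap := by
      rw [hρdef, Measure.map_map measurable_swap measurable_swap]
      have : (Prod.swap ∘ Prod.swap : Euc d × Euc d → Euc d × Euc d) = id := by
        ext q <;> simp
      rw [this, Measure.map_id]
    calc ∫⁻ q, G q ^ p ∂bigμ
        = ∫⁻ q, ENNReal.ofReal (dist q.2.1 q.1 ^ p) ∂bigμ := by
          exact lintegral_congr hGp
      _ = ∫⁻ y, ∫⁻ w, ENNReal.ofReal (dist w.1 y ^ p) ∂((κ ×ₖ η) y) ∂ν := by
          rw [hbigdef, Measure.lintegral_compProd (μ := ν) (κ := κ ×ₖ η)]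
          exact ((measurable_fst.comp measurable_snd).dist measurable_fst).pow_const p
            |>.ennreal_ofReal
      _ = ∫⁻ y, ∫⁻ x, ENNReal.ofReal (dist x y ^ p) ∂(κ y) ∂ν := by
          refine lintegral_congr fun y => ?_
          rw [Kernel.prod_apply κ η y, MeasureTheory.lintegral_prod (μ := κ y) (ν := η y) _
            (((measurable_fst.dist measurable_const).pow_const p).ennreal_ofReal.aemeasurable)]
          refine lintegral_congr fun x => ?_
          simp [lintegral_const, measure_univ]
      _ = ∫⁻ w, ENNReal.ofReal (dist w.2 w.1 ^ p) ∂ρ := by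
          rw [← hρdis, Measure.lintegral_compProd (μ := ν) (κ := κ) hmidm]
      _ = ∫⁻ z, ENNReal.ofReal (dist z.1 z.2 ^ p) ∂π₁ := by
          rw [hπ₁ρ, lintegral_map hFm measurable_swap]
          refine lintegral_congr fun w => ?_
          simp
  -- put everything together
  have hπfbound : (⨅ (π : Measure (Euc d × Euc d))
      (_ : π.map Prod.fst = μ ∧ π.map Prod.snd = Measure.sum m₂),
      ∫⁻ z, ENNReal.ofReal (dist z.1 z.2 ^ p) ∂π)
      ≤ ∫⁻ z, ENNReal.ofReal (dist z.1 z.2 ^ p) ∂πf :=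
    iInf₂_le πf ⟨hπffst, hπfsnd⟩
  have hchain : (⨅ (π : Measure (Euc d × Euc d))
      (_ : π.map Prod.fst = μ ∧ π.map Prod.snd = Measure.sum m₂),
      ∫⁻ z, ENNReal.ofReal (dist z.1 z.2 ^ p) ∂π) ^ (1/p)
      ≤ (ENNReal.ofReal ε ^ p + δ') ^ (1/p) + c := by
    calc (⨅ (π : Measure (Euc d × Euc d))
        (_ : π.map Prod.fst = μ ∧ π.map Prod.snd = Measure.sum m₂),
        ∫⁻ z, ENNReal.ofReal (dist z.1 z.2 ^ p) ∂π) ^ (1/p)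
        ≤ (∫⁻ z, ENNReal.ofReal (dist z.1 z.2 ^ p) ∂πf) ^ (1/p) :=
          ENNReal.rpow_le_rpow hπfbound (by positivity)
      _ ≤ (∫⁻ q, (G q + c) ^ p ∂bigμ) ^ (1/p) :=
          ENNReal.rpow_le_rpow hcost (by positivity)
      _ ≤ (∫⁻ q, G q ^ p ∂bigμ) ^ (1/p) + (∫⁻ (_ : Euc d × (Euc d × Euc d)), c ^ p ∂bigμ) ^ (1/p) :=
          hmink
      _ = (∫⁻ z, ENNReal.ofReal (dist z.1 z.2 ^ p) ∂π₁) ^ (1/p) + c := by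
          rw [hGint, hconst]
      _ ≤ (ENNReal.ofReal ε ^ p + δ') ^ (1/p) + c :=
          add_le_add_left (ENNReal.rpow_le_rpow hcost₁.le (by positivity)) c
  have hsplit : (ENNReal.ofReal ε ^ p + δ') ^ (1/p) ≤ ENNReal.ofReal ε + (δ : ℝ≥0∞) := by
    calc (ENNReal.ofReal ε ^ p + δ') ^ (1/p)
        ≤ (ENNReal.ofReal ε ^ p) ^ (1/p) + δ' ^ (1/p) :=
          ENNReal.rpow_add_le_add_rpow _ _ (by positivity) (by
            rw [div_le_one hp0]; exact hp)
      _ = ENNReal.ofReal ε + (δ : ℝ≥0∞) := by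
          rw [← ENNReal.rpow_mul, mul_one_div_cancel hp0', ENNReal.rpow_one, hδ'root]
  -- identify the real constant
  have hcid : 3 * diam (voronoiCell Λ) * (M : ℝ) ^ ((1 : ℝ) / d) * (N : ℝ) ^ (-(1 : ℝ) / d)
      = creal := by
    have hN0 : (0:ℝ) ≤ N := Nat.cast_nonneg N
    have hM0 : (0:ℝ) ≤ M := Nat.cast_nonneg M
    rw [hcrealdef, hhdef, neg_div, Real.rpow_neg hN0, Real.div_rpow hM0 hN0]
    ring
  rw [hcid, ENNReal.ofReal_add (hcid ▸ hcreal0) hε]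
  calc (⨅ (π : Measure (Euc d × Euc d))
      (_ : π.map Prod.fst = μ ∧ π.map Prod.snd = Measure.sum m₂),
      ∫⁻ z, ENNReal.ofReal (dist z.1 z.2 ^ p) ∂π) ^ (1/p)
      ≤ (ENNReal.ofReal ε ^ p + δ') ^ (1/p) + c := hchain
    _ ≤ (ENNReal.ofReal ε + (δ : ℝ≥0∞)) + c := add_le_add_left hsplit c
    _ = ENNReal.ofReal creal + ENNReal.ofReal ε + (δ : ℝ≥0∞) := by
        rw [hcdef]; ring
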